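/- Define a sequence of polynomials A_i ∈ ℕ[x, y] by A_0(x, y) = x and A_{i+1}(x, y) = x + A_i(x² + 2xy, x). Then for every n ≥ 1 the coefficient of x^n in A_i(x, 0) is eventually constant as i → ∞, and this eventual value equals the number of balanced trees with exactly n leaves. -/
import Mathlib


/-- Complete rooted planar binary trees. -/
inductive BTree where
  | leaf : BTree
  | node : BTree → BTree → BTree
  deriving DecidableEq

namespace BTree

/-- The height of a tree. -/
def ht : BTree → ℕ
  | leaf => 0
  | node l r => 1 + max l.ht r.ht

/-- The imbalance value of the root of a tree (`γ`). -/
def imb : BTree → ℤ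
  | leaf => 0
  | node l r => (r.ht : ℤ) - l.ht

/-- A tree is balanced if every node has imbalance value in {-1, 0, 1}. -/
def Balanced : BTree → Prop
  | leaf => True
  | node l r =>
      ((r.ht : ℤ) - l.ht = -1 ∨ (r.ht : ℤ) - l.ht = 0 ∨ (r.ht : ℤ) - l.ht = 1) ∧
      Balanced l ∧ Balanced r

/-- The subtree at a position (`false` = go left, `true` = go right). -/
def subtreeAt : BTree → List Bool → Option BTree
  | t, [] => some t
  | leaf, _ :: _ => none
  | node l _, false :: p => subtreeAt l p
  | node _ r, true :: p => subtreeAt r p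

/-- `p` is the position of an internal node of `t`. -/
def IsNodePos (t : BTree) (p : List Bool) : Prop :=
  ∃ l r, subtreeAt t p = some (node l r)

/-- Right rotation whose root `y` is at position `p`: the subtree
`(A ∧ B) ∧ C` at `p` is replaced by `A ∧ (B ∧ C)`. -/
inductive RotAt : BTree → List Bool → BTree → Prop
  | here (a b c : BTree) : RotAt (node (node a b) c) [] (node a (node b c))
  | left {l l' : BTree} (r : BTree) {p : List Bool} :
      RotAt l p l' → RotAt (node l r) (false :: p) (node l' r)
  | right (l : BTree) {r r' : BTree} {p : List Bool} :
      RotAt r p r' → RotAt (node l r) (true :: p) (node l r')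

/-- `t₁` is obtained from `t₀` by a single right rotation (`t₀ ⋌ t₁`). -/
def Rot (t₀ t₁ : BTree) : Prop := ∃ p, RotAt t₀ p t₁

/-- The Tamari order: reflexive transitive closure of right rotation. -/
def Tamari : BTree → BTree → Prop := Relation.ReflTransGen Rot

/-- Number of leaves. -/
def leaves : BTree → ℕ
  | leaf => 1
  | node l r => l.leaves + r.leaves

open MvPolynomial in
/-- The sequence of polynomials `A_0(x, y) = x`,
`A_{i+1}(x, y) = x + A_i(x² + 2xy, x)` (variable `0` is `x`, variable `1` is `y`). -/
noncomputable def balSeq : ℕ → MvPolynomial (Fin 2) ℕ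
  | 0 => X 0
  | i + 1 => X 0 + bind₁ ![X 0 ^ 2 + 2 * X 0 * X 1, X 0] (balSeq i)


open MvPolynomial in
/-- `Qp (h+1)` is the generating polynomial of balanced trees of height `h`. -/
noncomputable def Qp : ℕ → MvPolynomial ℕ ℕ
  | 0 => 0
  | 1 => X 0
  | (h+2) => Qp (h+1) ^ 2 + 2 * Qp (h+1) * Qp h

open MvPolynomial in
noncomputable def Rp : ℕ → MvPolynomial (Fin 2) ℕ
  | 0 => X 0
  | (h+1) => bind₁ ![X 0 ^ 2 + 2 * X 0 * X 1, X 0] (Rp h)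

/-- Balanced trees of height exactly `h`. -/
def bal : ℕ → Finset BTree
  | 0 => {leaf}
  | 1 => {node leaf leaf}
  | (h+2) =>
      ((bal (h+1)) ×ˢ (bal (h+1))).image (fun p => node p.1 p.2)
      ∪ ((bal (h+1)) ×ˢ (bal h)).image (fun p => node p.1 p.2)
      ∪ ((bal h) ×ˢ (bal (h+1))).image (fun p => node p.1 p.2)

open MvPolynomial in
theorem balSeq_eq_sum (i : ℕ) : balSeq i = ∑ h ∈ Finset.range (i+1), Rp h := by
  induction i with
  | zero => simp [balSeq, Rp]
  | succ i ih =>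
      rw [Finset.sum_range_succ', balSeq, ih, map_sum]
      simp only [Rp]
      rw [add_comm]

open MvPolynomial in
theorem bind_Rp (h : ℕ) : ∀ k, bind₁ ![Qp (k+1), Qp k] (Rp h) = Qp (h+k+1) := by
  induction h with
  | zero => intro k; simp [Rp]
  | succ h ih =>
      intro k
      rw [Rp, bind₁_bind₁]
      have : (fun i => bind₁ ![Qp (k+1), Qp k] (![X 0 ^ 2 + 2 * X 0 * X 1, X 0] i))
          = ![Qp (k+2), Qp (k+1)] := by
        funext i
        fin_cases i
        · show bind₁ ![Qp (k+1), Qp k] (X 0 ^ 2 + 2 * X 0 * X 1) = Qp (k+2)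
          rw [show Qp (k+2) = Qp (k+1) ^ 2 + 2 * Qp (k+1) * Qp k from rfl]
          simp [map_ofNat]
        · show bind₁ ![Qp (k+1), Qp k] (X 0) = Qp (k+1)
          simp
      rw [this, ih (k+1)]
      congr 1
      omega

theorem ht_eq_zero {T : BTree} (h : T.ht = 0) : T = leaf := by
  cases T with
  | leaf => rfl
  | node l r => simp only [ht] at h; omega

theorem mem_bal : ∀ h T, T ∈ bal h ↔ (Balanced T ∧ T.ht = h) := by
  intro h
  induction h using Nat.strong_induction_on with
  | _ h ih =>
    match h with
    | 0 =>
        intro T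
        cases T with
        | leaf => simp [bal, Balanced, ht]
        | node l r =>
            simp only [bal, Finset.mem_singleton, ht]
            constructor
            · intro he; exact absurd he (by simp)
            · intro he; omega
    | 1 =>
        intro T
        cases T with
        | leaf => simp [bal, ht]
        | node l r =>
            simp only [bal, Finset.mem_singleton, Balanced, ht]
            constructor
            · intro he
              injection he with h1 h2; subst h1; subst h2
              simp [ht, Balanced]
            · rintro ⟨⟨h1, _, _⟩, h2⟩
              have hl : l.ht = 0 ∧ r.ht = 0 := by omega
              rw [ht_eq_zero hl.1, ht_eq_zero hl.2]
    | (m+2) =>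
        intro T
        have ih1 := ih (m+1) (by omega)
        have ih0 := ih m (by omega)
        cases T with
        | leaf =>
            simp only [bal, Finset.mem_union, Finset.mem_image, Finset.mem_product, Prod.exists]
            constructor
            · rintro ((⟨a, b, _, hp⟩ | ⟨a, b, _, hp⟩) | ⟨a, b, _, hp⟩) <;> exact absurd hp (by simp)
            · rintro ⟨_, hht⟩; simp [ht] at hht
        | node l r =>
            simp only [bal, Finset.mem_union, Finset.mem_image, Finset.mem_product, Prod.exists]
            constructor
            · rintro ((⟨a, b, ⟨ha, hb⟩, hab⟩ | ⟨a, b, ⟨ha, hb⟩, hab⟩) | ⟨a, b, ⟨ha, hb⟩, hab⟩)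
              · injection hab with h1 h2; subst h1; subst h2
                obtain ⟨hba, ha2⟩ := (ih1 _).1 ha
                obtain ⟨hbb, hb2⟩ := (ih1 _).1 hb
                exact ⟨⟨by omega, hba, hbb⟩, by simp only [ht]; omega⟩
              · injection hab with h1 h2; subst h1; subst h2
                obtain ⟨hba, ha2⟩ := (ih1 _).1 ha
                obtain ⟨hbb, hb2⟩ := (ih0 _).1 hb
                exact ⟨⟨by omega, hba, hbb⟩, by simp only [ht]; omega⟩
              · injection hab with h1 h2; subst h1; subst h2
                obtain ⟨hba, ha2⟩ := (ih0 _).1 ha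
                obtain ⟨hbb, hb2⟩ := (ih1 _).1 hb
                exact ⟨⟨by omega, hba, hbb⟩, by simp only [ht]; omega⟩
            · rintro ⟨⟨himb, hbl, hbr⟩, hht⟩
              simp only [ht] at hht
              have hcases : (l.ht = m+1 ∧ r.ht = m+1) ∨ (l.ht = m+1 ∧ r.ht = m)
                  ∨ (l.ht = m ∧ r.ht = m+1) := by omega
              rcases hcases with ⟨h1, h2⟩ | ⟨h1, h2⟩ | ⟨h1, h2⟩
              · exact Or.inl (Or.inl ⟨l, r, ⟨(ih1 l).2 ⟨hbl, h1⟩, (ih1 r).2 ⟨hbr, h2⟩⟩, rfl⟩)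
              · exact Or.inl (Or.inr ⟨l, r, ⟨(ih1 l).2 ⟨hbl, h1⟩, (ih0 r).2 ⟨hbr, h2⟩⟩, rfl⟩)
              · exact Or.inr ⟨l, r, ⟨(ih0 l).2 ⟨hbl, h1⟩, (ih1 r).2 ⟨hbr, h2⟩⟩, rfl⟩

theorem ht_in_bal {h : ℕ} {T : BTree} (hT : T ∈ bal h) : T.ht = h :=
  ((mem_bal h T).1 hT).2

open MvPolynomial in
theorem sum_bal : ∀ h, ∑ T ∈ bal h, (X 0 : MvPolynomial ℕ ℕ) ^ T.leaves = Qp (h+1) := by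
  intro h
  induction h using Nat.strong_induction_on with
  | _ h ih =>
    match h with
    | 0 => simp [bal, Qp, leaves]
    | 1 => simp [bal, Qp, leaves]
    | (m+2) =>
        have ih1 := ih (m+1) (by omega)
        have ih0 := ih m (by omega)
        have hinj : ∀ (s t : Finset BTree),
            Set.InjOn (fun p : BTree × BTree => node p.1 p.2) ↑(s ×ˢ t) := by
          intro s t p hp q hq hpq
          simpa [Prod.ext_iff, BTree.node.injEq] using hpq
        have hsum : ∀ (s t : Finset BTree),
            ∑ T ∈ (s ×ˢ t).image (fun p => node p.1 p.2),
              (X 0 : MvPolynomial ℕ ℕ) ^ T.leaves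
            = (∑ T ∈ s, (X 0 : MvPolynomial ℕ ℕ) ^ T.leaves)
              * (∑ T ∈ t, (X 0 : MvPolynomial ℕ ℕ) ^ T.leaves) := by
          intro s t
          rw [Finset.sum_image (fun p hp q hq => hinj s t (by simpa using hp) (by simpa using hq)),
            Finset.sum_mul_sum, Finset.sum_product]
          simp [leaves, pow_add]
        have hd1 : Disjoint (((bal (m+1)) ×ˢ (bal (m+1))).image (fun p : BTree × BTree => node p.1 p.2))
            (((bal (m+1)) ×ˢ (bal m)).image (fun p : BTree × BTree => node p.1 p.2)) := by
          rw [Finset.disjoint_left]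
          rintro T hT hT'
          simp only [Finset.mem_image, Finset.mem_product, Prod.exists] at hT hT'
          obtain ⟨a, b, ⟨ha, hb⟩, rfl⟩ := hT
          obtain ⟨a', b', ⟨ha', hb'⟩, he⟩ := hT'
          obtain ⟨rfl, rfl⟩ : a' = a ∧ b' = b := by simpa [BTree.node.injEq] using he
          have := ht_in_bal hb; have := ht_in_bal hb'; omega
        have hd2 : Disjoint ((((bal (m+1)) ×ˢ (bal (m+1))).image (fun p : BTree × BTree => node p.1 p.2))
              ∪ (((bal (m+1)) ×ˢ (bal m)).image (fun p : BTree × BTree => node p.1 p.2)))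
            (((bal m) ×ˢ (bal (m+1))).image (fun p : BTree × BTree => node p.1 p.2)) := by
          rw [Finset.disjoint_left]
          rintro T hT hT'
          simp only [Finset.mem_union, Finset.mem_image, Finset.mem_product, Prod.exists] at hT hT'
          obtain ⟨a', b', ⟨ha', hb'⟩, he⟩ := hT'
          rcases hT with ⟨a, b, ⟨ha, hb⟩, he'⟩ | ⟨a, b, ⟨ha, hb⟩, he'⟩ <;>
          · rw [← he'] at he
            obtain ⟨rfl, rfl⟩ : a' = a ∧ b' = b := by simpa [BTree.node.injEq] using he
            have := ht_in_bal ha; have := ht_in_bal ha'; omega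
        rw [bal, Finset.sum_union hd2, Finset.sum_union hd1, hsum, hsum, hsum, ih1, ih0,
          show Qp (m+2+1) = Qp (m+2) ^ 2 + 2 * Qp (m+2) * Qp (m+1) from rfl]
        ring

theorem ht_lt_leaves : ∀ T : BTree, T.ht < T.leaves := by
  intro T
  induction T with
  | leaf => simp [ht, leaves]
  | node l r ihl ihr => simp only [ht, leaves]; omega

open MvPolynomial in
/-- For every `n ≥ 1`, the coefficient of `x^n` in `A_i(x, 0)` is eventually
constant as `i → ∞`, and its eventual value is the number of balanced trees
with exactly `n` leaves. -/
theorem balSeq_coeff_eventually_counts_balanced (n : ℕ) (hn : 1 ≤ n) :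
    ∃ N : ℕ, ∀ i ≥ N,
      coeff (Finsupp.single 0 n) (bind₁ ![X 0, 0] (balSeq i)) =
        Nat.card {T : BTree // Balanced T ∧ T.leaves = n} := by
  classical
  have hX0 : (![X 0, 0] : Fin 2 → MvPolynomial ℕ ℕ) = ![Qp 1, Qp 0] := by
    funext i; fin_cases i <;> simp [Qp]
  have hb : ∀ h, bind₁ ![X 0, (0 : MvPolynomial ℕ ℕ)] (Rp h) = Qp (h+1) := by
    intro h
    rw [hX0, bind_Rp h 0]
  have hQ : ∀ h, coeff (Finsupp.single 0 n) (Qp (h+1))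
      = ((bal h).filter (fun T => T.leaves = n)).card := by
    intro h
    rw [← sum_bal h, coeff_sum, Finset.card_filter]
    refine Finset.sum_congr rfl fun T _ => ?_
    rw [coeff_X_pow]
    simp only [(Finsupp.single_injective (0 : ℕ)).eq_iff]
  have hzero : ∀ h, n ≤ h → ((bal h).filter (fun T => T.leaves = n)).card = 0 := by
    intro h hh
    rw [Finset.card_eq_zero, Finset.filter_eq_empty_iff]
    intro T hT hln
    have h1 := ht_in_bal hT
    have h2 := ht_lt_leaves T
    omega
  refine ⟨n, fun i hi => ?_⟩
  have hset : {T : BTree | Balanced T ∧ T.leaves = n}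
      = ↑((Finset.range n).biUnion (fun h => (bal h).filter (fun T => T.leaves = n))) := by
    ext T
    simp only [Set.mem_setOf_eq, Finset.coe_biUnion, Finset.coe_filter, Set.mem_iUnion,
      Finset.mem_coe, Finset.mem_range, Set.mem_setOf_eq]
    constructor
    · rintro ⟨hbal, hlv⟩
      refine ⟨T.ht, ?_, (mem_bal T.ht T).2 ⟨hbal, rfl⟩, hlv⟩
      have := ht_lt_leaves T; omega
    · rintro ⟨h, _, hT, hlv⟩
      exact ⟨((mem_bal h T).1 hT).1, hlv⟩
  have hdis : ∀ a ∈ Finset.range n, ∀ b ∈ Finset.range n, a ≠ b →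
      Disjoint ((bal a).filter (fun T => T.leaves = n)) ((bal b).filter (fun T => T.leaves = n)) := by
    intro a _ b _ hab
    rw [Finset.disjoint_left]
    intro T hT hT'
    simp only [Finset.mem_filter] at hT hT'
    exact hab ((ht_in_bal hT.1).symm.trans (ht_in_bal hT'.1))
  have hterm : ∀ h, coeff (Finsupp.single (0 : ℕ) n) (bind₁ ![X 0, 0] (Rp h))
      = ((bal h).filter (fun T => T.leaves = n)).card := by
    intro h; rw [hb h, hQ h]
  rw [balSeq_eq_sum, map_sum, coeff_sum]
  simp only [hterm]
  rw [← Finset.sum_subset (Finset.range_subset_range.2 (show n ≤ i+1 by omega))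
      (fun h _ hh2 => hzero h (by simpa using hh2))]
  have hnc : Nat.card {T : BTree // Balanced T ∧ T.leaves = n}
      = Set.ncard {T : BTree | Balanced T ∧ T.leaves = n} :=
    Nat.card_coe_set_eq _
  rw [hnc, hset, Set.ncard_coe_finset, Finset.card_biUnion hdis]

end BTree
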